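/- (Budget-blocked element case.) Let f be a nonnegative k-submodular function with f(0) = 0 and V ≠ ∅, and let s = s^n be the output of an RLA run with threshold τ ≥ 0. Suppose there exist e* ∈ V \ supp(s) and p ∈ {1,…,k} such that Δ_{(e*,p)}f(s^{<e*}) ≥ c(e*)·τ and c(s^{<e*}) + c(e*) > B. Then max{f(s), max_{e ∈ V, i ∈ {1,…,k}} f((e,i))} ≥ B·τ/2. -/

import Mathlib

/-!
Every element accepted by the run gains at least `τ` per unit of cost, so `f` never decreases
along the run and `τ · c(s^{<e*}) ≤ f(s^{<e*}) ≤ f(s)`. By `k`-submodularity and `f(0) = 0`, the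
gain of `(e*, p)` at `s^{<e*}` is at most `f((e*, p))`. Adding up,
`f(s) + f((e*, p)) ≥ τ · (c(s^{<e*}) + c(e*)) ≥ τ · B`, so one of the two terms is at least `B·τ/2`.
-/

/-- The meet `x ⊓ y` of two `k`-sets, with components `Xᵢ ∩ Yᵢ`. -/
def sqcap {V : Type*} (x y : V → ℕ) : V → ℕ :=
  fun e => if x e = y e then x e else 0

/-- The join `x ⊔ y` of two `k`-sets, with components
`Zᵢ = (Xᵢ ∪ Yᵢ) \ ⋃_{j ≠ i} (Xⱼ ∪ Yⱼ)`. -/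
def sqcup {V : Type*} (x y : V → ℕ) : V → ℕ :=
  fun e =>
    if x e = 0 then y e
    else if y e = 0 then x e
    else if x e = y e then x e else 0

/-- A `k`-set: every element gets a position in `{0, 1, …, k}`
(`0` meaning unselected). -/
def IsKSet {V : Type*} (k : ℕ) (x : V → ℕ) : Prop := ∀ e, x e ≤ k

/-- `x ⊑ y`: every component of `x` is contained in the corresponding
component of `y`. -/
def KLE {V : Type*} (x y : V → ℕ) : Prop := ∀ e, x e ≠ 0 → y e = x e

/-- The singleton `k`-set `(e, i)`. -/
def singl {V : Type*} [DecidableEq V] (e : V) (i : ℕ) : V → ℕ :=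
  fun e' => if e' = e then i else 0

/-- `k`-submodularity: `f x + f y ≥ f (x ⊓ y) + f (x ⊔ y)` for all `k`-sets. -/
def KSubmodular {V : Type*} (k : ℕ) (f : (V → ℕ) → ℝ) : Prop :=
  ∀ x y : V → ℕ, IsKSet k x → IsKSet k y →
    f x + f y ≥ f (sqcap x y) + f (sqcup x y)

/-- The marginal gain `Δ_{(e,i)} f(x) = f (x ⊔ (e,i)) - f x`. -/
def marg {V : Type*} [DecidableEq V] (f : (V → ℕ) → ℝ) (e : V) (i : ℕ)
    (x : V → ℕ) : ℝ :=
  f (sqcup x (singl e i)) - f x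

/-- The cost of a `k`-set: the total cost of its support. -/
noncomputable def cost {V : Type*} [Fintype V] (c : V → ℝ) (x : V → ℕ) : ℝ :=
  ∑ e ∈ Finset.univ.filter (fun e => x e ≠ 0), c e

lemma IsKSet.sqcup {V : Type*} {k : ℕ} {x y : V → ℕ} (hx : IsKSet k x) (hy : IsKSet k y) :
    IsKSet k (sqcup x y) := by
  intro v
  unfold _root_.sqcup
  split_ifs
  exacts [hy v, hx v, hx v, Nat.zero_le k]

section KSet

variable {V : Type*} [DecidableEq V]

lemma isKSet_singl {k i : ℕ} (e : V) (hi : i ≤ k) : IsKSet k (singl e i) := by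
  intro v
  unfold singl
  split_ifs
  exacts [hi, Nat.zero_le k]

lemma sqcup_singl_of_eq {x : V → ℕ} {e : V} {i : ℕ} (h : x e = i) :
    sqcup x (singl e i) = x := by
  funext v
  by_cases hv : v = e
  · subst hv h
    simp [sqcup, singl]
  · by_cases hx : x v = 0 <;> simp [sqcup, singl, hv, hx]

lemma sqcap_singl_of_ne {x : V → ℕ} {e : V} {i : ℕ} (h : x e ≠ i) :
    sqcap x (singl e i) = fun _ => 0 := by
  funext v
  by_cases hv : v = e
  · subst hv
    simp [sqcap, singl, h]
  · simp only [sqcap, singl, if_neg hv]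
    split_ifs <;> simp_all

lemma cost_sqcup_singl_le [Fintype V] {c : V → ℝ} (hc : ∀ v, 0 ≤ c v) (x : V → ℕ)
    (e : V) (i : ℕ) : cost c (sqcup x (singl e i)) ≤ cost c x + c e := by
  unfold cost
  have hsupp : Finset.univ.filter (fun v => sqcup x (singl e i) v ≠ 0)
      ⊆ insert e (Finset.univ.filter (fun v => x v ≠ 0)) := by
    intro v
    by_cases hv : v = e
    · simp [hv]
    · simp [sqcup, singl, hv]
  calc ∑ v ∈ Finset.univ.filter (fun v => sqcup x (singl e i) v ≠ 0), c v
      ≤ ∑ v ∈ insert e (Finset.univ.filter (fun v => x v ≠ 0)), c v :=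
        Finset.sum_le_sum_of_subset_of_nonneg hsupp fun v _ _ => hc v
    _ ≤ _ := by
        by_cases he : e ∈ Finset.univ.filter (fun v => x v ≠ 0)
        · rw [Finset.insert_eq_of_mem he]
          linarith [hc e]
        · rw [Finset.sum_insert he, add_comm]

/-- In the degenerate case `x e = i` the gain is `0`; otherwise `x ⊓ (e,i) = 0` and this is
`k`-submodularity applied to `x` and `(e,i)`. -/
lemma marg_le_singl {k : ℕ} {f : (V → ℕ) → ℝ} (hsub : KSubmodular k f)
    (hnn : ∀ x : V → ℕ, IsKSet k x → 0 ≤ f x) (hf0 : f (fun _ => 0) = 0)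
    {x : V → ℕ} (hx : IsKSet k x) (e : V) {i : ℕ} (hi : i ≤ k) :
    marg f e i x ≤ f (singl e i) := by
  by_cases h : x e = i
  · simpa [marg, sqcup_singl_of_eq h] using hnn _ (isKSet_singl e hi)
  · have := hsub x (singl e i) hx (isKSet_singl e hi)
    rw [sqcap_singl_of_ne h, hf0] at this
    unfold marg
    linarith

end KSet

section Run

variable {V : Type*} [DecidableEq V] {f : (V → ℕ) → ℝ} {c : V → ℝ} {τ : ℝ}

/-- An RLA step with the budget test and the choice of the best position forgotten: the
invariants below hold whatever the rejection rule and the position. -/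
def ThresholdStep (f : (V → ℕ) → ℝ) (c : V → ℝ) (τ : ℝ) (x : V → ℕ) (e : V) (i : ℕ)
    (y : V → ℕ) : Prop :=
  y = x ∨ (y = sqcup x (singl e i) ∧ c e * τ ≤ marg f e i x)

lemma thresholdStep_of_acceptance_rule {P : Prop} {x y : V → ℕ} {e : V} {i : ℕ}
    (h : (P ∧ c e * τ ≤ marg f e i x → y = sqcup x (singl e i)) ∧
      (¬ (P ∧ c e * τ ≤ marg f e i x) → y = x)) :
    ThresholdStep f c τ x e i y := by
  by_cases hacc : P ∧ c e * τ ≤ marg f e i x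
  · exact Or.inr ⟨h.1 hacc, hacc.2⟩
  · exact Or.inl (h.2 hacc)

namespace ThresholdStep

variable {x y : V → ℕ} {e : V} {i : ℕ}

lemma isKSet {k : ℕ} (h : ThresholdStep f c τ x e i y) (hx : IsKSet k x) (hi : i ≤ k) :
    IsKSet k y := by
  rcases h with rfl | ⟨rfl, -⟩
  exacts [hx, hx.sqcup (isKSet_singl e hi)]

lemma le (h : ThresholdStep f c τ x e i y) (hc : 0 ≤ c e) (hτ : 0 ≤ τ) : f x ≤ f y := by
  rcases h with rfl | ⟨rfl, hgain⟩
  · rfl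
  · unfold marg at hgain
    nlinarith [mul_nonneg hc hτ]

lemma mul_cost_le [Fintype V] (h : ThresholdStep f c τ x e i y) (hc : ∀ v, 0 ≤ c v)
    (hτ : 0 ≤ τ) (hx : τ * cost c x ≤ f x) : τ * cost c y ≤ f y := by
  rcases h with rfl | ⟨rfl, hgain⟩
  · exact hx
  · calc τ * cost c (sqcup x (singl e i))
        ≤ τ * (cost c x + c e) := mul_le_mul_of_nonneg_left (cost_sqcup_singl_le hc x e i) hτ
      _ = τ * cost c x + c e * τ := by ring
      _ ≤ f x + marg f e i x := add_le_add hx hgain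
      _ = f (sqcup x (singl e i)) := by unfold marg; ring

end ThresholdStep

def IsThresholdRun (f : (V → ℕ) → ℝ) (c : V → ℝ) (τ : ℝ) (n : ℕ) (e : ℕ → V)
    (pos : ℕ → ℕ) (s : ℕ → V → ℕ) : Prop :=
  ∀ j < n, ThresholdStep f c τ (s j) (e j) (pos j) (s (j + 1))

namespace IsThresholdRun

variable {n : ℕ} {e : ℕ → V} {pos : ℕ → ℕ} {s : ℕ → V → ℕ}

lemma isKSet {k : ℕ} (hrun : IsThresholdRun f c τ n e pos s) (h0 : IsKSet k (s 0))
    (hpos : ∀ j < n, pos j ≤ k) {m : ℕ} (hm : m ≤ n) : IsKSet k (s m) := by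
  induction m with
  | zero => exact h0
  | succ m ih => exact (hrun m hm).isKSet (ih (by omega)) (hpos m hm)

lemma le (hrun : IsThresholdRun f c τ n e pos s) (hc : ∀ v, 0 ≤ c v) (hτ : 0 ≤ τ)
    {j m : ℕ} (hjm : j ≤ m) (hm : m ≤ n) : f (s j) ≤ f (s m) := by
  induction m, hjm using Nat.le_induction with
  | base => exact le_rfl
  | succ m _ ih => exact (ih (by omega)).trans ((hrun m hm).le (hc _) hτ)

lemma mul_cost_le [Fintype V] (hrun : IsThresholdRun f c τ n e pos s) (hc : ∀ v, 0 ≤ c v)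
    (hτ : 0 ≤ τ) (hf0 : f (fun _ => 0) = 0) (hs0 : s 0 = fun _ => 0) {m : ℕ} (hm : m ≤ n) :
    τ * cost c (s m) ≤ f (s m) := by
  induction m with
  | zero => simp [hs0, hf0, cost]
  | succ m ih => exact (hrun m hm).mul_cost_le hc hτ (ih (by omega))

end IsThresholdRun

end Run

theorem stmt9_general {V : Type*} [Fintype V] [DecidableEq V]
    (k : ℕ)
    (f : (V → ℕ) → ℝ)
    (hsub : KSubmodular k f)
    (hnn : ∀ x : V → ℕ, IsKSet k x → 0 ≤ f x)
    (hf0 : f (fun _ => 0) = 0)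
    (c : V → ℝ) (hc : ∀ e, 0 < c e) (B : ℝ)
    (τ : ℝ) (hτ : 0 ≤ τ)
    (n : ℕ) (e : ℕ → V)
    (s : ℕ → (V → ℕ)) (pos : ℕ → ℕ)
    (hs0 : s 0 = fun _ => 0)
    (hposk : ∀ j < n, 1 ≤ pos j ∧ pos j ≤ k)
    (hstep : ∀ j < n,
      ((cost c (s j) + c (e j) ≤ B ∧ c (e j) * τ ≤ marg f (e j) (pos j) (s j)) →
        s (j + 1) = sqcup (s j) (singl (e j) (pos j))) ∧
      (¬ (cost c (s j) + c (e j) ≤ B ∧ c (e j) * τ ≤ marg f (e j) (pos j) (s j)) →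
        s (j + 1) = s j))
    (hex : ∃ j, j < n ∧ s n (e j) = 0 ∧ ∃ p, 1 ≤ p ∧ p ≤ k ∧
      c (e j) * τ ≤ marg f (e j) p (s j) ∧ B < cost c (s j) + c (e j)) :
    B * τ / 2 ≤ f (s n) ∨
      ∃ (e' : V) (i : ℕ), 1 ≤ i ∧ i ≤ k ∧ B * τ / 2 ≤ f (singl e' i) := by
  obtain ⟨j, hjn, -, p, hp1, hpk, hgain, hblocked⟩ := hex
  have hrun : IsThresholdRun f c τ n e pos s := fun j hj =>
    thresholdStep_of_acceptance_rule (hstep j hj)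
  have hc' : ∀ v, 0 ≤ c v := fun v => (hc v).le
  have hsj : IsKSet k (s j) :=
    hrun.isKSet (hs0 ▸ fun _ => Nat.zero_le k) (fun j hj => (hposk j hj).2) hjn.le
  have hsingl : c (e j) * τ ≤ f (singl (e j) p) :=
    hgain.trans (marg_le_singl hsub hnn hf0 hsj (e j) hpk)
  have hsum : B * τ ≤ f (s n) + f (singl (e j) p) :=
    calc B * τ ≤ (cost c (s j) + c (e j)) * τ := mul_le_mul_of_nonneg_right hblocked.le hτ
      _ = τ * cost c (s j) + c (e j) * τ := by ring
      _ ≤ f (s j) + f (singl (e j) p) := add_le_add (hrun.mul_cost_le hc' hτ hf0 hs0 hjn.le) hsingl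
      _ ≤ f (s n) + f (singl (e j) p) := by gcongr; exact hrun.le hc' hτ hjn.le le_rfl
  by_cases hfs : B * τ / 2 ≤ f (s n)
  · exact Or.inl hfs
  · exact Or.inr ⟨e j, p, hp1, hpk, by linarith⟩

/-- budget-blocked element case: if some unselected element
passes the threshold but is blocked by the budget during an RLA run, then
`max {f(s), max_{e,i} f((e,i))} ≥ B·τ/2`. -/
theorem stmt9 {V : Type*} [Fintype V] [DecidableEq V] [Nonempty V]
    (k : ℕ) (hk : 2 ≤ k)
    (f : (V → ℕ) → ℝ)
    (hsub : KSubmodular k f)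
    (hnn : ∀ x : V → ℕ, IsKSet k x → 0 ≤ f x)
    (hf0 : f (fun _ => 0) = 0)
    (c : V → ℝ) (hc : ∀ e, 0 < c e) (B : ℝ) (hB : 0 < B)
    (τ : ℝ) (hτ : 0 ≤ τ)
    (n : ℕ) (e : ℕ → V)
    (hinj : ∀ j₁ j₂, j₁ < n → j₂ < n → e j₁ = e j₂ → j₁ = j₂)
    (hsurj : ∀ v : V, ∃ j, j < n ∧ e j = v)
    (s : ℕ → (V → ℕ)) (pos : ℕ → ℕ)
    (hs0 : s 0 = fun _ => 0)
    (hposk : ∀ j < n, 1 ≤ pos j ∧ pos j ≤ k)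
    (hbest : ∀ j < n, ∀ l, 1 ≤ l → l ≤ k →
      marg f (e j) l (s j) ≤ marg f (e j) (pos j) (s j))
    (hstep : ∀ j < n,
      ((cost c (s j) + c (e j) ≤ B ∧ c (e j) * τ ≤ marg f (e j) (pos j) (s j)) →
        s (j + 1) = sqcup (s j) (singl (e j) (pos j))) ∧
      (¬ (cost c (s j) + c (e j) ≤ B ∧ c (e j) * τ ≤ marg f (e j) (pos j) (s j)) →
        s (j + 1) = s j))
    (hex : ∃ j, j < n ∧ s n (e j) = 0 ∧ ∃ p, 1 ≤ p ∧ p ≤ k ∧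
      c (e j) * τ ≤ marg f (e j) p (s j) ∧ B < cost c (s j) + c (e j)) :
    B * τ / 2 ≤ f (s n) ∨
      ∃ (e' : V) (i : ℕ), 1 ≤ i ∧ i ≤ k ∧ B * τ / 2 ≤ f (singl e' i) :=
  stmt9_general k f hsub hnn hf0 c hc B τ hτ n e s pos hs0 hposk hstep hex
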